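/- For the symmetric discrete Lagrangian L(x₀,x₁,z₀,z₁) = ½((x₁-x₀)/h)² - (V(x₀)+V(x₁))/2 - α(z₀+z₁)/2 with h α ≠ -2, the discrete generalized Euler-Lagrange equation is equivalent to (x_{j+1} - 2x_j + x_{j-1})/h² = -V'(x_j) - (α/(1 + hα/2))·((x_j - x_{j-1})/h - (h/2)V'(x_j)). -/

import Mathlib

/-!
The partial derivatives of `L10` are `D₁L = -(x₁ - x₀)/h² - V'(x₀)/2`,
`D₂L = (x₁ - x₀)/h² - V'(x₁)/2` and `D₃L = D₄L = -α/2`. Substituted into the discrete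
equation, the factor `(1 + h D₃L)/(1 - h D₄L)` becomes `(1 - hα/2)/(1 + hα/2)`, and clearing
the nonzero denominator `h²(2 + hα)` yields the claimed scheme multiplied by `-2`.
-/

/-- The symmetric discrete Lagrangian of Example 3.6 (second order contact
integrator): `L(x₀,x₁,z₀,z₁) = ½((x₁-x₀)/h)² - (V(x₀)+V(x₁))/2 - α(z₀+z₁)/2`. -/
noncomputable def L10 (V : ℝ → ℝ) (α h : ℝ) (q : ℝ × ℝ × ℝ × ℝ) : ℝ :=
  (1 / 2) * ((q.2.1 - q.1) / h) ^ 2 - (V q.1 + V q.2.1) / 2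
    - α * (q.2.2.1 + q.2.2.2) / 2

theorem fderiv_L10_apply (V : ℝ → ℝ) (hV : Differentiable ℝ V) (α h : ℝ)
    (p v : ℝ × ℝ × ℝ × ℝ) :
    fderiv ℝ (L10 V α h) p v =
      (p.2.1 - p.1) / h * ((v.2.1 - v.1) / h)
        - (deriv V p.1 * v.1 + deriv V p.2.1 * v.2.1) / 2
        - α * (v.2.2.1 + v.2.2.2) / 2 := by
  have hx₀ : HasFDerivAt (fun q : ℝ × ℝ × ℝ × ℝ => q.1) _ p :=
    hasFDerivAt_fst (𝕜 := ℝ) (p := p)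
  have hx₁ : HasFDerivAt (fun q : ℝ × ℝ × ℝ × ℝ => q.2.1) _ p :=
    (hasFDerivAt_snd (𝕜 := ℝ) (p := p)).fst
  have hz₀ : HasFDerivAt (fun q : ℝ × ℝ × ℝ × ℝ => q.2.2.1) _ p :=
    (hasFDerivAt_snd (𝕜 := ℝ) (p := p)).snd.fst
  have hz₁ : HasFDerivAt (fun q : ℝ × ℝ × ℝ × ℝ => q.2.2.2) _ p :=
    (hasFDerivAt_snd (𝕜 := ℝ) (p := p)).snd.snd
  have hhalf (u : ℝ) : HasDerivAt (fun u : ℝ => u / 2) (1 / 2) u :=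
    (hasDerivAt_id u).div_const 2
  have hL : HasFDerivAt (L10 V α h) _ p :=
    (((((hasDerivAt_id _).div_const h).pow 2).const_mul (1 / 2)).comp_hasFDerivAt p
        (hx₁.fun_sub hx₀)).fun_sub
      ((hhalf _).comp_hasFDerivAt p (((hV _).hasDerivAt.comp_hasFDerivAt p hx₀).fun_add
        ((hV _).hasDerivAt.comp_hasFDerivAt p hx₁))) |>.fun_sub
      ((hhalf _).comp_hasFDerivAt p ((hz₀.fun_add hz₁).const_mul α))
  rw [hL.fderiv]
  simp only [one_div, Nat.cast_ofNat, id_eq, Nat.add_one_sub_one, pow_one, smul_add,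
    sub_apply, smul_apply, add_apply,
    ContinuousLinearMap.comp_apply, ContinuousLinearMap.coe_snd', ContinuousLinearMap.coe_fst',
    smul_eq_mul]
  ring

/-- for the symmetric discrete Lagrangian `L10` with `hα ≠ -2`,
the discrete generalized Euler-Lagrange equation is equivalent to
`(x_{j+1} - 2x_j + x_{j-1})/h² = -V'(x_j) - (α/(1 + hα/2))((x_j - x_{j-1})/h - (h/2)V'(x_j))`. -/
theorem stmt10 (V : ℝ → ℝ) (hV : Differentiable ℝ V) (α h : ℝ) (hh : 0 < h)
    (hα : h * α ≠ -2) (xm x xp zm z zp : ℝ) :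
    (fderiv ℝ (L10 V α h) (x, xp, z, zp) (1, 0, 0, 0)
        + fderiv ℝ (L10 V α h) (xm, x, zm, z) (0, 1, 0, 0)
          * (1 + h * fderiv ℝ (L10 V α h) (x, xp, z, zp) (0, 0, 1, 0))
          / (1 - h * fderiv ℝ (L10 V α h) (xm, x, zm, z) (0, 0, 0, 1)) = 0) ↔
      (xp - 2 * x + xm) / h ^ 2
        = -deriv V x - α / (1 + h * α / 2) * ((x - xm) / h - h / 2 * deriv V x) := by
  have hh₀ : h ≠ 0 := hh.ne'
  have hden : 2 + h * α ≠ 0 := fun H => hα (by linarith)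
  have hD₁ : fderiv ℝ (L10 V α h) (x, xp, z, zp) (1, 0, 0, 0) =
      -((xp - x) / h ^ 2) - deriv V x / 2 := by
    rw [fderiv_L10_apply V hV]; ring
  have hD₂ : fderiv ℝ (L10 V α h) (xm, x, zm, z) (0, 1, 0, 0) =
      (x - xm) / h ^ 2 - deriv V x / 2 := by
    rw [fderiv_L10_apply V hV]; ring
  have hD₃ : fderiv ℝ (L10 V α h) (x, xp, z, zp) (0, 0, 1, 0) = -(α / 2) := by
    rw [fderiv_L10_apply V hV]; ring
  have hD₄ : fderiv ℝ (L10 V α h) (xm, x, zm, z) (0, 0, 0, 1) = -(α / 2) := by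
    rw [fderiv_L10_apply V hV]; ring
  rw [hD₁, hD₂, hD₃, hD₄, show 1 - h * -(α / 2) = 1 + h * α / 2 by ring]
  field_simp
  constructor <;> intro H
  · linear_combination (-1 / 2 : ℝ) * H
  · linear_combination (-2 : ℝ) * H
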